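/- arXiv:1103.3030 — 4 statements merged into one kernel-verified Lean document; each statement's English description precedes it below -/
import Mathlib

section
/- Let A(x,z) be a symmetric n×n matrix-valued function, C¹ in z, defined for (x,z) ∈ Ω' × [-M₀,M₀], satisfying for some vector of nonnegative functions k = (k¹,…,kⁿ) and Λ ≥ 1 the diagonal equivalence ∑ᵢ kⁱ(x,z) ξᵢ² ≤ ξᵗ A(x,z) ξ ≤ Λ ∑ᵢ kⁱ(x,z) ξᵢ² for all ξ ∈ ℝⁿ, and the super subordination condition |∂_z A(x,z) ξ|² ≤ B² k*(x,z) ξᵗ A(x,z) ξ where k* = minᵢ kⁱ. Then there exists a constant C = C(B, M₀) such that for all (x,z), (x,z̃) ∈ Ω' × [-M₀,M₀] and all ξ ∈ ℝⁿ, C⁻¹ ξᵗ A(x,z) ξ ≤ ξᵗ A(x,z̃) ξ ≤ C ξᵗ A(x,z) ξ. -/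
/-!
Along a fixed `x`, the function `q(z) = ξᵗ A(x,z) ξ` is nonnegative and, by Cauchy–Schwarz,
`|q'(z)|² ≤ |ξ|² |∂_z A ξ|² ≤ B² (k* |ξ|²) q(z) ≤ B² q(z)²`, the last step being the lower
diagonal bound together with `k* ≤ kⁱ`. So `|q'| ≤ |B| q`, and Grönwall's inequality in `z` gives
`q(z̃) ≤ exp(|B| |z̃ - z|) q(z) ≤ exp(2 |B| M₀) q(z)`.
-/

open Set Matrix

section Gronwall

variable {f f' : ℝ → ℝ} {a b K : ℝ}

theorem abs_le_abs_mul_exp_of_abs_deriv_le (hab : a ≤ b)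
    (hf : ∀ t ∈ Icc a b, HasDerivAt f (f' t) t) (bound : ∀ t ∈ Icc a b, |f' t| ≤ K * |f t|) :
    |f b| ≤ |f a| * Real.exp (K * (b - a)) := by
  have h := norm_le_gronwallBound_of_norm_deriv_right_le (δ := ‖f a‖) (ε := 0)
    (fun t ht => (hf t ht).continuousAt.continuousWithinAt)
    (fun t ht => (hf t (Ico_subset_Icc_self ht)).hasDerivWithinAt) le_rfl
    (fun t ht => by simpa only [Real.norm_eq_abs, add_zero] using bound t (Ico_subset_Icc_self ht))
    b (right_mem_Icc.2 hab)
  rwa [gronwallBound_ε0, Real.norm_eq_abs, Real.norm_eq_abs] at h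

theorem abs_le_abs_mul_exp_of_abs_deriv_le_rev (hab : a ≤ b)
    (hf : ∀ t ∈ Icc a b, HasDerivAt f (f' t) t) (bound : ∀ t ∈ Icc a b, |f' t| ≤ K * |f t|) :
    |f a| ≤ |f b| * Real.exp (K * (b - a)) := by
  have reflect : ∀ t ∈ Icc a b, a + b - t ∈ Icc a b := fun t ht =>
    ⟨by linarith [ht.2], by linarith [ht.1]⟩
  have h := abs_le_abs_mul_exp_of_abs_deriv_le (f := fun t => f (a + b - t))
    (f' := fun t => f' (a + b - t) * (-1)) hab
    (fun t ht => (hf _ (reflect t ht)).comp t ((hasDerivAt_id t).const_sub (a + b)))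
    (fun t ht => by simpa [abs_mul] using bound _ (reflect t ht))
  simpa using h

theorem le_exp_mul_of_abs_deriv_le (hK : 0 ≤ K)
    (hf : ∀ t ∈ Icc a b, HasDerivAt f (f' t) t) (hf0 : ∀ t ∈ Icc a b, 0 ≤ f t)
    (bound : ∀ t ∈ Icc a b, |f' t| ≤ K * f t) {s t : ℝ} (hs : s ∈ Icc a b) (ht : t ∈ Icc a b) :
    f t ≤ Real.exp (K * (b - a)) * f s := by
  have bound' : ∀ u ∈ Icc a b, |f' u| ≤ K * |f u| := fun u hu => by
    rw [abs_of_nonneg (hf0 u hu)]; exact bound u hu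
  have grow : ∀ {u v : ℝ}, u ≤ v → u ∈ Icc a b → v ∈ Icc a b →
      Real.exp (K * (v - u)) ≤ Real.exp (K * (b - a)) := fun huv hu hv =>
    Real.exp_le_exp.2 (mul_le_mul_of_nonneg_left (by linarith [hu.1, hv.2]) hK)
  rw [← abs_of_nonneg (hf0 t ht), ← abs_of_nonneg (hf0 s hs), mul_comm]
  rcases le_total s t with hst | hts
  · have hsub : Icc s t ⊆ Icc a b := Icc_subset_Icc hs.1 ht.2
    exact (abs_le_abs_mul_exp_of_abs_deriv_le hst (fun u hu => hf u (hsub hu))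
      (fun u hu => bound' u (hsub hu))).trans
        (mul_le_mul_of_nonneg_left (grow hst hs ht) (abs_nonneg _))
  · have hsub : Icc t s ⊆ Icc a b := Icc_subset_Icc ht.1 hs.2
    exact (abs_le_abs_mul_exp_of_abs_deriv_le_rev hts (fun u hu => hf u (hsub hu))
      (fun u hu => bound' u (hsub hu))).trans
        (mul_le_mul_of_nonneg_left (grow hts ht hs) (abs_nonneg _))

end Gronwall

section QuadraticForm

variable {ι : Type*} [Fintype ι]

theorem hasDerivAt_dotProduct_mulVec {M : ℝ → Matrix ι ι ℝ} {M' : Matrix ι ι ℝ} {t : ℝ}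
    (ξ : ι → ℝ) (hM : ∀ i j, HasDerivAt (fun s => M s i j) (M' i j) t) :
    HasDerivAt (fun s => ξ ⬝ᵥ (M s *ᵥ ξ)) (ξ ⬝ᵥ (M' *ᵥ ξ)) t := by
  simp only [dotProduct, mulVec]
  exact HasDerivAt.fun_sum fun i _ =>
    (HasDerivAt.fun_sum fun j _ => (hM i j).mul_const (ξ j)).const_mul (ξ i)

theorem iInf_mul_sum_sq_le_sum_mul_sq (c : ι → ℝ) (ξ : ι → ℝ) :
    (⨅ i, c i) * ∑ i, ξ i ^ 2 ≤ ∑ i, c i * ξ i ^ 2 := by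
  rw [Finset.mul_sum]
  exact Finset.sum_le_sum fun i _ =>
    mul_le_mul_of_nonneg_right (ciInf_le (Finite.bddBelow_range c) i) (sq_nonneg _)

theorem abs_dotProduct_le_of_sum_sq_le {ξ v : ι → ℝ} {c q B : ℝ} (hq : 0 ≤ q)
    (hξ : c * ∑ i, ξ i ^ 2 ≤ q) (hv : ∑ i, v i ^ 2 ≤ B ^ 2 * c * q) :
    |ξ ⬝ᵥ v| ≤ |B| * q := by
  have cauchySchwarz : (ξ ⬝ᵥ v) ^ 2 ≤ (∑ i, ξ i ^ 2) * ∑ i, v i ^ 2 :=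
    Finset.sum_mul_sq_le_sq_mul_sq Finset.univ ξ v
  have hsq : (ξ ⬝ᵥ v) ^ 2 ≤ (|B| * q) ^ 2 := calc
    (ξ ⬝ᵥ v) ^ 2 ≤ (∑ i, ξ i ^ 2) * (B ^ 2 * c * q) :=
      cauchySchwarz.trans (mul_le_mul_of_nonneg_left hv (by positivity))
    _ = (c * ∑ i, ξ i ^ 2) * (B ^ 2 * q) := by ring
    _ ≤ q * (B ^ 2 * q) := mul_le_mul_of_nonneg_right hξ (by positivity)
    _ = (|B| * q) ^ 2 := by rw [mul_pow, sq_abs]; ring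
  exact abs_le_of_sq_le_sq hsq (by positivity)

end QuadraticForm

theorem quadratic_form_comparability_general {n : ℕ} (Ω' : Set (Fin (n + 1) → ℝ))
    (M₀ Λ B : ℝ)
    (A Az : (Fin (n + 1) → ℝ) → ℝ → Matrix (Fin (n + 1)) (Fin (n + 1)) ℝ)
    (k : Fin (n + 1) → (Fin (n + 1) → ℝ) → ℝ → ℝ)
    (hk : ∀ i x z, 0 ≤ k i x z)
    (hAz : ∀ x ∈ Ω', ∀ z ∈ Icc (-M₀) M₀, ∀ i j, HasDerivAt (fun t => A x t i j) (Az x z i j) z)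
    (hdiag : ∀ x ∈ Ω', ∀ z ∈ Icc (-M₀) M₀, ∀ ξ : Fin (n + 1) → ℝ,
      (∑ i, k i x z * ξ i ^ 2) ≤ ξ ⬝ᵥ (A x z *ᵥ ξ) ∧
        ξ ⬝ᵥ (A x z *ᵥ ξ) ≤ Λ * ∑ i, k i x z * ξ i ^ 2)
    (hss : ∀ x ∈ Ω', ∀ z ∈ Icc (-M₀) M₀, ∀ ξ : Fin (n + 1) → ℝ,
      (∑ j, ((Az x z *ᵥ ξ) j) ^ 2) ≤ B ^ 2 * (⨅ i, k i x z) * (ξ ⬝ᵥ (A x z *ᵥ ξ))) :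
    ∃ C : ℝ, 0 < C ∧ ∀ x ∈ Ω', ∀ z ∈ Icc (-M₀) M₀, ∀ zt ∈ Icc (-M₀) M₀,
      ∀ ξ : Fin (n + 1) → ℝ,
        C⁻¹ * (ξ ⬝ᵥ (A x z *ᵥ ξ)) ≤ ξ ⬝ᵥ (A x zt *ᵥ ξ) ∧
          ξ ⬝ᵥ (A x zt *ᵥ ξ) ≤ C * (ξ ⬝ᵥ (A x z *ᵥ ξ)) := by
  refine ⟨Real.exp (|B| * (M₀ - -M₀)), Real.exp_pos _, fun x hx z hz zt hzt ξ => ?_⟩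
  have hq0 : ∀ t ∈ Icc (-M₀) M₀, 0 ≤ ξ ⬝ᵥ (A x t *ᵥ ξ) := fun t ht =>
    (Finset.sum_nonneg fun i _ => mul_nonneg (hk i x t) (sq_nonneg (ξ i))).trans
      (hdiag x hx t ht ξ).1
  have hbound : ∀ t ∈ Icc (-M₀) M₀, |ξ ⬝ᵥ (Az x t *ᵥ ξ)| ≤ |B| * ξ ⬝ᵥ (A x t *ᵥ ξ) :=
    fun t ht => abs_dotProduct_le_of_sum_sq_le (hq0 t ht)
      ((iInf_mul_sum_sq_le_sum_mul_sq (k · x t) ξ).trans (hdiag x hx t ht ξ).1) (hss x hx t ht ξ)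
  have compare := fun {s t} (hs : s ∈ Icc (-M₀) M₀) (ht : t ∈ Icc (-M₀) M₀) =>
    le_exp_mul_of_abs_deriv_le (abs_nonneg B)
      (fun u hu => hasDerivAt_dotProduct_mulVec ξ (hAz x hx u hu)) hq0 hbound hs ht
  exact ⟨(inv_mul_le_iff₀ (Real.exp_pos _)).2 (compare hzt hz), compare hz hzt⟩

/-- If `A(x,z)` is a symmetric matrix, `C¹` in `z`, equivalent to a diagonal form with
nonnegative entries `kⁱ` (constant `Λ ≥ 1`) and satisfying the super subordination
condition `|∂_z A ξ|² ≤ B² k* ξᵗAξ` on `Ω' × [-M₀,M₀]`, then the quadratic forms of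
`A(x,z)` and `A(x,zt)` are comparable with a constant `C = C(B,M₀)`. -/
theorem quadratic_form_comparability {n : ℕ} (Ω' : Set (Fin (n + 1) → ℝ))
    (M₀ Λ B : ℝ) (hM : 1 ≤ M₀) (hΛ : 1 ≤ Λ) (hB : 0 < B)
    (A Az : (Fin (n + 1) → ℝ) → ℝ → Matrix (Fin (n + 1)) (Fin (n + 1)) ℝ)
    (k : Fin (n + 1) → (Fin (n + 1) → ℝ) → ℝ → ℝ)
    (hk : ∀ i x z, 0 ≤ k i x z)
    (hsymm : ∀ x z, (A x z).IsSymm)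
    (hAz : ∀ x ∈ Ω', ∀ z ∈ Icc (-M₀) M₀, ∀ i j, HasDerivAt (fun t => A x t i j) (Az x z i j) z)
    (hdiag : ∀ x ∈ Ω', ∀ z ∈ Icc (-M₀) M₀, ∀ ξ : Fin (n + 1) → ℝ,
      (∑ i, k i x z * ξ i ^ 2) ≤ ξ ⬝ᵥ (A x z *ᵥ ξ) ∧
        ξ ⬝ᵥ (A x z *ᵥ ξ) ≤ Λ * ∑ i, k i x z * ξ i ^ 2)
    (hss : ∀ x ∈ Ω', ∀ z ∈ Icc (-M₀) M₀, ∀ ξ : Fin (n + 1) → ℝ,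
      (∑ j, ((Az x z *ᵥ ξ) j) ^ 2) ≤ B ^ 2 * (⨅ i, k i x z) * (ξ ⬝ᵥ (A x z *ᵥ ξ))) :
    ∃ C : ℝ, 0 < C ∧ ∀ x ∈ Ω', ∀ z ∈ Icc (-M₀) M₀, ∀ zt ∈ Icc (-M₀) M₀,
      ∀ ξ : Fin (n + 1) → ℝ,
        C⁻¹ * (ξ ⬝ᵥ (A x z *ᵥ ξ)) ≤ ξ ⬝ᵥ (A x zt *ᵥ ξ) ∧
          ξ ⬝ᵥ (A x zt *ᵥ ξ) ≤ C * (ξ ⬝ᵥ (A x z *ᵥ ξ)) :=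
  quadratic_form_comparability_general Ω' M₀ Λ B A Az k hk hAz hdiag hss
end

section
/- Given any continuous function u on [0,1], there exists a function w on [0,1] which is continuous on [0,1], twice continuously differentiable on (0,1], concave, strictly increasing, satisfies w(x) ≥ u(x) for all x ∈ [0,1], and w(0) = u(0). -/
/-!
Take `w x = u 0 + x + ∑ₙ cₙ φ(x / rₙ)`, where `φ s = 1 - max (1 - s) 0 ^ 3` is a concave,
nondecreasing `C²` ramp rising from `0` at `s = 0` to `1` on `[1, ∞)`. Every term is concave and
nondecreasing, and the linear term makes `w` strictly increasing. With `cₙ = M 2⁻ⁿ`, where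
`u - u 0 ≤ M`, and radii `rₙ → 0` small enough that `u - u 0 < cₙ₊₁` on `[0, rₙ)`, a point
`x ∈ [r_k, r_{k-1})` gets the bound `u x - u 0 ≤ c_k ≤ c_k φ(x / r_k)`. Near any `x₀ > 0` all but
finitely many terms are constant, which gives `C²` on `(0, 1]`.
-/

open Set Filter Topology

theorem hasDerivAt_max_zero_pow (k : ℕ) (t : ℝ) :
    HasDerivAt (fun t : ℝ => max t 0 ^ (k + 2)) ((k + 2) * max t 0 ^ (k + 1)) t := by
  rcases lt_trichotomy t 0 with ht | rfl | ht
  · refine ((hasDerivAt_const t 0).congr_deriv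
      (by simp [max_eq_right ht.le])).congr_of_eventuallyEq ?_
    filter_upwards [eventually_lt_nhds ht] with s hs
    simp [max_eq_right hs.le]
  · have hleft : HasDerivWithinAt (fun t : ℝ => max t 0 ^ (k + 2)) 0 (Iic 0) 0 :=
      (hasDerivWithinAt_const 0 _ 0).congr
        (fun s hs => by simp [max_eq_right (mem_Iic.1 hs)]) (by simp)
    have hright : HasDerivWithinAt (fun t : ℝ => max t 0 ^ (k + 2)) 0 (Ici 0) 0 :=
      ((hasDerivAt_pow (k + 2) 0).hasDerivWithinAt.congr
        (fun s hs => by simp [max_eq_left (mem_Ici.1 hs)]) (by simp)).congr_deriv (by simp)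
    have h := hleft.union hright
    rw [Iic_union_Ici, hasDerivWithinAt_univ] at h
    simpa using h
  · refine ((hasDerivAt_pow (k + 2) t).congr_deriv
      (by simp [max_eq_left ht.le])).congr_of_eventuallyEq ?_
    filter_upwards [eventually_gt_nhds ht] with s hs
    simp [max_eq_left hs.le]

theorem contDiff_max_zero_pow (n : ℕ) : ContDiff ℝ n (fun t : ℝ => max t 0 ^ (n + 1)) := by
  induction n with
  | zero => simpa using continuous_id.max continuous_const
  | succ n ih =>
    rw [Nat.cast_add_one, contDiff_succ_iff_deriv]
    refine ⟨fun t => (hasDerivAt_max_zero_pow n t).differentiableAt, by simp, ?_⟩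
    rw [funext fun t => (hasDerivAt_max_zero_pow n t).deriv]
    exact contDiff_const.mul ih

noncomputable def cubicRamp (s : ℝ) : ℝ := 1 - max (1 - s) 0 ^ 3

theorem cubicRamp_zero : cubicRamp 0 = 0 := by norm_num [cubicRamp]

theorem cubicRamp_of_one_le {s : ℝ} (hs : 1 ≤ s) : cubicRamp s = 1 := by
  simp [cubicRamp, max_eq_right (sub_nonpos.2 hs)]

theorem cubicRamp_le_one (s : ℝ) : cubicRamp s ≤ 1 := by
  have := pow_nonneg (le_max_right (1 - s) 0) 3
  unfold cubicRamp; linarith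

theorem monotone_cubicRamp : Monotone cubicRamp := fun s t hst => by
  have := pow_le_pow_left₀ (le_max_right _ _) (max_le_max_right 0 (sub_le_sub_left hst 1)) 3
  unfold cubicRamp; linarith

theorem cubicRamp_nonneg {s : ℝ} (hs : 0 ≤ s) : 0 ≤ cubicRamp s :=
  cubicRamp_zero ▸ monotone_cubicRamp hs

theorem concaveOn_cubicRamp : ConcaveOn ℝ univ cubicRamp := by
  have hbase : ConvexOn ℝ univ fun s : ℝ => max (1 - s) 0 :=
    ((convexOn_const 1 convex_univ).sub (concaveOn_id convex_univ)).sup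
      (convexOn_const 0 convex_univ)
  exact (concaveOn_const 1 convex_univ).sub (hbase.pow (fun s _ => le_max_right _ _) 3)

theorem contDiff_cubicRamp : ContDiff ℝ 2 cubicRamp :=
  contDiff_const.sub ((contDiff_max_zero_pow 2).comp (contDiff_const.sub contDiff_id))

theorem mul_cubicRamp_nonneg {a s : ℝ} (ha : 0 ≤ a) (hs : 0 ≤ s) : 0 ≤ a * cubicRamp s :=
  mul_nonneg ha (cubicRamp_nonneg hs)

theorem mul_cubicRamp_le {a : ℝ} (ha : 0 ≤ a) (s : ℝ) : a * cubicRamp s ≤ a :=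
  mul_le_of_le_one_right ha (cubicRamp_le_one s)

theorem ConcaveOn.tsum {E : Type*} [AddCommMonoid E] [Module ℝ E] {s : Set E}
    {f : ℕ → E → ℝ} (hf : ∀ n, ConcaveOn ℝ s (f n)) (hs : Convex ℝ s)
    (hsum : ∀ x ∈ s, Summable fun n => f n x) : ConcaveOn ℝ s fun x => ∑' n, f n x := by
  refine ⟨hs, fun x hx y hy a b ha hb hab => ?_⟩
  have hx' := (hsum x hx).mul_left a
  have hy' := (hsum y hy).mul_left b
  simp only [smul_eq_mul]
  rw [← (hsum x hx).tsum_mul_left, ← (hsum y hy).tsum_mul_left, ← hx'.tsum_add hy']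
  refine (hx'.add hy').tsum_le_tsum (fun n => ?_) (hsum _ (hs hx hy ha hb hab))
  simpa only [smul_eq_mul] using (hf n).2 hx hy ha hb hab

noncomputable def rampSeries (c r : ℕ → ℝ) (x : ℝ) : ℝ := ∑' n, c n * cubicRamp (x / r n)

theorem rampSeries_zero (c r : ℕ → ℝ) : rampSeries c r 0 = 0 := by
  simp [rampSeries, cubicRamp_zero]

section rampSeries

variable {c r : ℕ → ℝ}

theorem summable_rampSeries (hc : ∀ n, 0 ≤ c n) (hcs : Summable c) (hr : ∀ n, 0 < r n) {x : ℝ}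
    (hx : 0 ≤ x) : Summable fun n => c n * cubicRamp (x / r n) :=
  hcs.of_nonneg_of_le (fun n => mul_cubicRamp_nonneg (hc n) (div_nonneg hx (hr n).le))
    (fun n => mul_cubicRamp_le (hc n) _)

theorem monotoneOn_rampSeries (hc : ∀ n, 0 ≤ c n) (hcs : Summable c) (hr : ∀ n, 0 < r n) :
    MonotoneOn (rampSeries c r) (Ici 0) := fun _ hx _ hy hxy =>
  (summable_rampSeries hc hcs hr hx).tsum_le_tsum (fun n => mul_le_mul_of_nonneg_left
      (monotone_cubicRamp (div_le_div_of_nonneg_right hxy (hr n).le)) (hc n))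
    (summable_rampSeries hc hcs hr hy)

theorem concaveOn_rampSeries (hc : ∀ n, 0 ≤ c n) (hcs : Summable c) (hr : ∀ n, 0 < r n) :
    ConcaveOn ℝ (Ici 0) (rampSeries c r) :=
  ConcaveOn.tsum (fun n => ((concaveOn_cubicRamp.comp_linearMap
      (LinearMap.mulRight ℝ (r n)⁻¹)).smul (hc n)).subset (subset_univ _) (convex_Ici 0))
    (convex_Ici 0) fun _ hx => summable_rampSeries hc hcs hr hx

theorem continuousOn_rampSeries (hc : ∀ n, 0 ≤ c n) (hcs : Summable c) (hr : ∀ n, 0 < r n) :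
    ContinuousOn (rampSeries c r) (Ici 0) :=
  continuousOn_tsum (fun n => (continuous_const.mul (contDiff_cubicRamp.continuous.comp
      (continuous_id.div_const _))).continuousOn) hcs fun n x hx => by
    rw [Real.norm_of_nonneg (mul_cubicRamp_nonneg (hc n) (div_nonneg hx (hr n).le))]
    exact mul_cubicRamp_le (hc n) _

theorem contDiffOn_rampSeries (hc : ∀ n, 0 ≤ c n) (hcs : Summable c) (hr : ∀ n, 0 < r n)
    (hr0 : Tendsto r atTop (𝓝 0)) : ContDiffOn ℝ 2 (rampSeries c r) (Ioi 0) := by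
  intro x₀ hx₀
  obtain ⟨N, hN⟩ : ∃ N, ∀ n ≥ N, r n < x₀ / 2 :=
    eventually_atTop.1 (hr0.eventually (gt_mem_nhds (half_pos hx₀)))
  -- near `x₀` all terms beyond the `N`-th have saturated at their height `c n`
  have hlocal : rampSeries c r =ᶠ[𝓝 x₀]
      fun x => ∑ n ∈ Finset.range N, c n * cubicRamp (x / r n) + ∑' n, c (n + N) := by
    filter_upwards [Ioi_mem_nhds (half_lt_self hx₀)] with x hx
    have htail (n : ℕ) : c (n + N) * cubicRamp (x / r (n + N)) = c (n + N) := by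
      rw [cubicRamp_of_one_le ((one_le_div (hr _)).2 ((hN _ (Nat.le_add_left N n)).trans hx).le),
        mul_one]
    have hsum := summable_rampSeries hc hcs hr ((half_pos hx₀).le.trans hx.le)
    rw [rampSeries, ← hsum.sum_add_tsum_nat_add N, tsum_congr htail]
  have hsmooth : ContDiff ℝ 2
      fun x => ∑ n ∈ Finset.range N, c n * cubicRamp (x / r n) + ∑' n, c (n + N) :=
    (ContDiff.sum fun n _ => contDiff_const.mul (contDiff_cubicRamp.comp
      (contDiff_id.div_const _))).add contDiff_const
  exact (hsmooth.contDiffAt.congr_of_eventuallyEq hlocal).contDiffWithinAt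

theorem le_rampSeries (hc : ∀ n, 0 ≤ c n) (hcs : Summable c) (hr : ∀ n, 0 < r n) {x y : ℝ}
    (hx : ∃ n, r n ≤ x) (h0 : y ≤ c 0) (hsucc : ∀ n, x < r n → y ≤ c (n + 1)) :
    y ≤ rampSeries c r x := by
  have hx0 : 0 ≤ x := let ⟨m, hm⟩ := hx; (hr m).le.trans hm
  have hterm (k : ℕ) (hk : r k ≤ x) : c k ≤ rampSeries c r x := by
    have := (summable_rampSeries hc hcs hr hx0).le_tsum k
      fun n _ => mul_cubicRamp_nonneg (hc n) (div_nonneg hx0 (hr n).le)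
    rwa [cubicRamp_of_one_le ((one_le_div (hr k)).2 hk), mul_one] at this
  -- the first `r k` below `x` decides which bound on `y` applies
  have hspec := Nat.find_spec hx
  match hk : Nat.find hx with
  | 0 => exact h0.trans (hterm 0 (by rwa [hk] at hspec))
  | j + 1 =>
    exact (hsucc j (not_le.1 (Nat.find_min hx (hk ▸ j.lt_succ_self)))).trans
      (hterm _ (by rwa [hk] at hspec))

end rampSeries

theorem ContinuousWithinAt.exists_radii_tendsto_zero {α β : Type*} [PseudoMetricSpace α]
    [PseudoMetricSpace β] {u : α → β} {s : Set α} {a : α} (hu : ContinuousWithinAt u s a)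
    {ε : ℕ → ℝ} (hε : ∀ n, 0 < ε n) :
    ∃ r : ℕ → ℝ, (∀ n, 0 < r n) ∧ Tendsto r atTop (𝓝 0) ∧
      ∀ n, ∀ x ∈ s, dist x a < r n → dist (u x) (u a) < ε n := by
  choose d hd hdu using fun n => Metric.continuousWithinAt_iff.1 hu (ε n) (hε n)
  refine ⟨fun n => min (d n) ((1 / 2) ^ n), fun n => lt_min (hd n) (by positivity), ?_,
    fun n x hx hxa => hdu n hx (hxa.trans_le (min_le_left _ _))⟩
  exact squeeze_zero (fun n => (lt_min (hd n) (by positivity)).le) (fun n => min_le_right _ _)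
    (tendsto_pow_atTop_nhds_zero_of_lt_one (by norm_num) (by norm_num))

/-- Concave majorant lemma: every continuous `u` on `[0,1]` admits a majorant `w` which is
continuous on `[0,1]`, `C²` on `(0,1]`, concave, strictly increasing, with `w(0) = u(0)`. -/
theorem concave_majorant (u : ℝ → ℝ) (hu : ContinuousOn u (Icc 0 1)) :
    ∃ w : ℝ → ℝ,
      ContinuousOn w (Icc 0 1) ∧
      ContDiffOn ℝ 2 w (Ioc 0 1) ∧
      ConcaveOn ℝ (Icc 0 1) w ∧
      StrictMonoOn w (Icc 0 1) ∧
      (∀ x ∈ Icc (0 : ℝ) 1, u x ≤ w x) ∧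
      w 0 = u 0 := by
  have h0 : (0 : ℝ) ∈ Icc 0 1 := left_mem_Icc.2 zero_le_one
  obtain ⟨xmax, -, hxmax⟩ := isCompact_Icc.exists_isMaxOn (nonempty_Icc.2 zero_le_one) hu
  obtain ⟨M, hM, hMu⟩ : ∃ M > 0, ∀ x ∈ Icc (0 : ℝ) 1, u x - u 0 ≤ M :=
    ⟨u xmax - u 0 + 1, by linarith [isMaxOn_iff.1 hxmax 0 h0],
      fun x hx => by linarith [isMaxOn_iff.1 hxmax x hx]⟩
  set c : ℕ → ℝ := fun n => M * (1 / 2) ^ n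
  have hc n : 0 ≤ c n := by positivity
  have hcs : Summable c := summable_geometric_two.mul_left M
  obtain ⟨r, hr, hr0, hru⟩ := (hu 0 h0).exists_radii_tendsto_zero (ε := fun n => c (n + 1))
    fun n => by positivity
  refine ⟨fun x => u 0 + x + rampSeries c r x,
    (continuousOn_const.add continuousOn_id).add
      ((continuousOn_rampSeries hc hcs hr).mono Icc_subset_Ici_self),
    (contDiff_const.add contDiff_id).contDiffOn.add
      ((contDiffOn_rampSeries hc hcs hr hr0).mono Ioc_subset_Ioi_self),
    (((concaveOn_const _ (convex_Ici 0)).add (concaveOn_id (convex_Ici 0))).add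
      (concaveOn_rampSeries hc hcs hr)).subset Icc_subset_Ici_self (convex_Icc 0 1),
    (strictMonoOn_id.const_add (u 0)).add_monotone
      ((monotoneOn_rampSeries hc hcs hr).mono Icc_subset_Ici_self),
    fun x hx => ?_, by simp [rampSeries_zero]⟩
  rcases hx.1.eq_or_lt with rfl | hxpos
  · simp [rampSeries_zero]
  have hrx : ∃ n, r n ≤ x := (hr0.eventually (gt_mem_nhds hxpos)).exists.imp fun _ h => h.le
  have hramp := le_rampSeries hc hcs hr hrx ((hMu x hx).trans_eq (by simp [c])) fun n hn =>
    (abs_sub_lt_iff.1 (hru n x hx (by rwa [Real.dist_eq, sub_zero, abs_of_pos hxpos]))).1.le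
  dsimp only
  linarith
end

section
/- Let m ≥ 1 be an integer and let w satisfy w(x² + w²)^{m-1/2} = -y implicitly with (x,y) ≠ (0,0). Then the implicit partial derivative w_x = -((2m-1) x w)/(x² + 2m w²) satisfies |w_x| ≤ m. Moreover, with k(x,z) = 2m(x²+z²)^{2m-1}, one has k(x,w)·w_y² = 2m (x²+w²)²/(x²+2mw²)² ≤ 2m. -/
open Real

/-- For `w` satisfying `w (x² + w²)^{m-1/2} = -y`, the implicit derivative
`w_x = -((2m-1) x w)/(x² + 2 m w²)` satisfies `|w_x| ≤ m`, and with
`k(x,z) = 2m (x²+z²)^{2m-1}` and `w_y = -(x²+w²)^{3/2-m}/(x²+2mw²)` one has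
`k(x,w) w_y² = 2m (x²+w²)²/(x²+2mw²)² ≤ 2m`. -/
theorem sharpness_example_gradient_bounds (m : ℕ) (hm : 1 ≤ m) (w : ℝ → ℝ → ℝ)
    (hw : ∀ x y : ℝ, w x y * (x ^ 2 + (w x y) ^ 2) ^ ((m : ℝ) - 1 / 2) = -y) :
    ∀ x y : ℝ, (x, y) ≠ ((0 : ℝ), (0 : ℝ)) →
      |(-((2 * (m : ℝ) - 1) * x * w x y) / (x ^ 2 + 2 * (m : ℝ) * (w x y) ^ 2))| ≤ (m : ℝ) ∧
      2 * (m : ℝ) * (x ^ 2 + (w x y) ^ 2) ^ (2 * m - 1) *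
          (-(x ^ 2 + (w x y) ^ 2) ^ ((3 : ℝ) / 2 - (m : ℝ)) /
            (x ^ 2 + 2 * (m : ℝ) * (w x y) ^ 2)) ^ 2 =
        2 * (m : ℝ) * (x ^ 2 + (w x y) ^ 2) ^ 2 /
          (x ^ 2 + 2 * (m : ℝ) * (w x y) ^ 2) ^ 2 ∧
      2 * (m : ℝ) * (x ^ 2 + (w x y) ^ 2) ^ 2 /
          (x ^ 2 + 2 * (m : ℝ) * (w x y) ^ 2) ^ 2 ≤ 2 * (m : ℝ) := by
  intro x y hxy
  set a := w x y with ha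
  have hw' := hw x y
  have hm' : (1:ℝ) ≤ (m:ℝ) := by exact_mod_cast hm
  have hA : 0 < x ^ 2 + a ^ 2 := by
    rcases lt_or_eq_of_le (by positivity : (0:ℝ) ≤ x ^ 2 + a ^ 2) with h | h
    · exact h
    · exfalso
      have hx : x = 0 := by nlinarith [sq_nonneg x, sq_nonneg a]
      have haa : a = 0 := by nlinarith [sq_nonneg x, sq_nonneg a]
      rw [← ha, haa, zero_mul] at hw'
      have hy : y = 0 := by linarith [hw']
      exact hxy (by rw [hx, hy])
  have hD : 0 < x ^ 2 + 2 * (m:ℝ) * a ^ 2 := by nlinarith [sq_nonneg a]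
  have hAD : x ^ 2 + a ^ 2 ≤ x ^ 2 + 2 * (m:ℝ) * a ^ 2 := by nlinarith [sq_nonneg a]
  refine ⟨?_, ?_, ?_⟩
  · rw [abs_div, abs_of_pos hD, div_le_iff₀ hD, abs_le]
    constructor
    · nlinarith [mul_nonneg (by linarith : (0:ℝ) ≤ 2*(m:ℝ)-1) (sq_nonneg (x - a)),
        mul_nonneg (mul_nonneg (by linarith : (0:ℝ) ≤ (m:ℝ)-1) (by linarith : (0:ℝ) ≤ (m:ℝ))) (sq_nonneg a),
        sq_nonneg x, sq_nonneg a]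
    · nlinarith [mul_nonneg (by linarith : (0:ℝ) ≤ 2*(m:ℝ)-1) (sq_nonneg (x + a)),
        mul_nonneg (mul_nonneg (by linarith : (0:ℝ) ≤ (m:ℝ)-1) (by linarith : (0:ℝ) ≤ (m:ℝ))) (sq_nonneg a),
        sq_nonneg x, sq_nonneg a]
  · have key : (x ^ 2 + a ^ 2 : ℝ) ^ (2 * m - 1) *
        ((x ^ 2 + a ^ 2) ^ ((3:ℝ)/2 - (m:ℝ))) ^ 2 = (x ^ 2 + a ^ 2) ^ 2 := by
      have h2m : ((2 * m - 1 : ℕ) : ℝ) = 2 * (m:ℝ) - 1 := by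
        have h1 : (1:ℕ) ≤ 2 * m := by omega
        push_cast [h1]
        ring
      rw [← rpow_natCast (x ^ 2 + a ^ 2) (2 * m - 1), h2m,
        ← rpow_natCast ((x ^ 2 + a ^ 2) ^ ((3:ℝ)/2 - (m:ℝ))) 2,
        ← rpow_mul hA.le, ← rpow_add hA,
        show (2 * (m:ℝ) - 1 + ((3:ℝ)/2 - (m:ℝ)) * (2:ℕ)) = ((2:ℕ):ℝ) by push_cast; ring,
        rpow_natCast]
    rw [div_pow, neg_sq, mul_div_assoc, ← key]
    ring
  · rw [div_le_iff₀ (by positivity : (0:ℝ) < (x ^ 2 + 2 * (m:ℝ) * a ^ 2) ^ 2)]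
    nlinarith [mul_nonneg (sub_nonneg.2 hAD)
      (by linarith : (0:ℝ) ≤ (x ^ 2 + a ^ 2) + (x ^ 2 + 2 * (m:ℝ) * a ^ 2)), hm',
      mul_nonneg (by linarith : (0:ℝ) ≤ 2*(m:ℝ)) (mul_nonneg (sub_nonneg.2 hAD)
      (by linarith : (0:ℝ) ≤ (x ^ 2 + a ^ 2) + (x ^ 2 + 2 * (m:ℝ) * a ^ 2)))]
end

section
/- Let k : ℝ → ℝ be smooth, nonnegative, with k(x) > 0 for all x ≠ 0 (k may vanish to infinite order at 0). Then the vector field (0, √(k(x)))·∇ = √(k(x)) ∂_y on ℝ² is locally Lipschitz: for every compact interval D ⊂ ℝ there exists C_D such that |√(k(x₁)) − √(k(x₂))| ≤ C_D |x₁ − x₂| for all x₁, x₂ ∈ D, where C_D depends only on an upper bound for |k''| on a neighborhood of D. -/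
open Set

/-- If `k` is smooth, nonnegative, and positive away from `0`, then `√k` is locally
Lipschitz: on every compact interval `[a,b]` there is a constant `C` with
`|√(k x₁) - √(k x₂)| ≤ C |x₁ - x₂|`. -/
theorem sqrt_of_nonneg_smooth_locally_lipschitz (k : ℝ → ℝ)
    (hsmooth : ContDiff ℝ (⊤ : ℕ∞) k)
    (hnonneg : ∀ x, 0 ≤ k x)
    (hpos : ∀ x : ℝ, x ≠ 0 → 0 < k x) :
    ∀ a b : ℝ, a ≤ b → ∃ C : ℝ, 0 < C ∧
      ∀ x₁ ∈ Icc a b, ∀ x₂ ∈ Icc a b,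
        |Real.sqrt (k x₁) - Real.sqrt (k x₂)| ≤ C * |x₁ - x₂| := by
  intro a b hab
  have hone : (1 : WithTop ℕ∞) ≤ ((⊤:ℕ∞) : WithTop ℕ∞) := by exact_mod_cast le_top
  have hki : ContDiff ℝ ((⊤:ℕ∞) : WithTop ℕ∞) k := hsmooth.of_le (by simp)
  have hk : Differentiable ℝ k := hki.differentiable (by simp)
  have hk'c : ContDiff ℝ ((⊤:ℕ∞) : WithTop ℕ∞) (deriv k) :=
    (contDiff_infty_iff_deriv.mp hki).2
  have hk' : Differentiable ℝ (deriv k) := hk'c.differentiable (by simp)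
  have hk''cont : Continuous (deriv (deriv k)) := hk'c.continuous_deriv hone
  -- bounds
  obtain ⟨M₀, hM₀⟩ := isCompact_Icc.exists_bound_of_continuousOn
    (s := Icc (a-1) (b+1)) hk''cont.continuousOn
  obtain ⟨K₀, hK₀⟩ := isCompact_Icc.exists_bound_of_continuousOn
    (s := Icc a b) hk.continuous.continuousOn
  set M := max M₀ 1 with hMdef
  have hM1 : (1:ℝ) ≤ M := le_max_right _ _
  have hMpos : (0:ℝ) < M := lt_of_lt_of_le one_pos hM1
  set K := max K₀ 0 with hKdef
  have hKnonneg : (0:ℝ) ≤ K := le_max_right _ _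
  have hKbound : ∀ x ∈ Icc a b, k x ≤ K := fun x hx =>
    le_trans (le_trans (le_abs_self _) (hK₀ x hx)) (le_max_left _ _)
  have hMbound : ∀ x ∈ Icc (a-1) (b+1), |deriv (deriv k) x| ≤ M := fun x hx =>
    le_trans (hM₀ x hx) (le_max_left _ _)
  -- Lipschitz bound on deriv k
  have hlip : ∀ x ∈ Icc (a-1) (b+1), ∀ z ∈ Icc (a-1) (b+1),
      |deriv k z - deriv k x| ≤ M * |z - x| := by
    intro x hx z hz
    have := Convex.norm_image_sub_le_of_norm_deriv_le (f := deriv k)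
      (fun y _ => hk' y)
      (fun y hy => by simpa [Real.norm_eq_abs] using hMbound y hy)
      (convex_Icc _ _) hx hz
    simpa [Real.norm_eq_abs] using this
  have hsubI : Icc a b ⊆ Icc (a-1) (b+1) := Icc_subset_Icc (by linarith) (by linarith)
  -- Taylor-type inequality
  have key : ∀ x ∈ Icc a b, ∀ t : ℝ, |t| ≤ 1 → 0 ≤ k x + deriv k x * t + M * t^2 := by
    intro x hx t ht
    have hxS : x ∈ Icc (a-1) (b+1) := hsubI hx
    have hyS : x + t ∈ Icc (a-1) (b+1) := by
      rcases hx with ⟨hx1, hx2⟩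
      rcases abs_le.mp ht with ⟨ht1, ht2⟩
      constructor <;> [linarith; linarith]
    have hsub : uIcc x (x + t) ⊆ Icc (a-1) (b+1) := uIcc_subset_Icc hxS hyS
    have hφd : ∀ z, HasDerivAt (fun z => k z - deriv k x * (z - x))
        (deriv k z - deriv k x) z := by
      intro z
      have h1 : HasDerivAt (fun z => deriv k x * (z - x)) (deriv k x) z := by
        simpa using ((hasDerivAt_id z).sub_const x).const_mul (deriv k x)
      exact ((hk z).hasDerivAt).sub h1
    have hbound : ∀ z ∈ uIcc x (x + t),
        ‖deriv (fun z => k z - deriv k x * (z - x)) z‖ ≤ M * |t| := by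
      intro z hz
      rw [(hφd z).deriv]
      have h2 : |z - x| ≤ |t| := by
        rw [Set.mem_uIcc] at hz
        rw [abs_sub_le_iff]
        rcases hz with ⟨h1', h2'⟩ | ⟨h1', h2'⟩ <;> constructor <;>
          linarith [le_abs_self t, neg_abs_le t, abs_nonneg t]
      calc ‖deriv k z - deriv k x‖ = |deriv k z - deriv k x| := rfl
        _ ≤ M * |z - x| := hlip x hxS z (hsub hz)
        _ ≤ M * |t| := mul_le_mul_of_nonneg_left h2 hMpos.le
    have hmvt := Convex.norm_image_sub_le_of_norm_deriv_le
      (f := fun z => k z - deriv k x * (z - x))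
      (fun z _ => (hφd z).differentiableAt) hbound (convex_uIcc _ _)
      left_mem_uIcc right_mem_uIcc
    have hmvt' : |k (x + t) - deriv k x * t - k x| ≤ M * |t| * |t| := by
      have e : (x + t) - x = t := by ring
      simpa [Real.norm_eq_abs, e] using hmvt
    have h0 := hnonneg (x + t)
    have h1 := (abs_le.mp hmvt').2
    rw [mul_assoc, abs_mul_abs_self, ← pow_two] at h1
    linarith
  -- Glaeser step
  have glaeser : ∀ x ∈ Icc a b,
      (deriv k x)^2 ≤ 4 * M * k x ∨ (M ≤ k x ∧ |deriv k x| ≤ k x + M) := by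
    intro x hx
    have h2M : (0:ℝ) < 2 * M := by linarith
    rcases le_or_gt (|deriv k x|) (2 * M) with hc | hc
    · left
      have ht : |(-(deriv k x) / (2 * M))| ≤ 1 := by
        rw [abs_div, abs_neg, abs_of_pos h2M, div_le_one h2M]
        exact hc
      have hkey := key x hx _ ht
      have h4 : 0 ≤ (k x + deriv k x * (-(deriv k x) / (2 * M))
          + M * (-(deriv k x) / (2 * M))^2) * (4 * M) :=
        mul_nonneg hkey (by linarith)
      have e : (k x + deriv k x * (-(deriv k x) / (2 * M))
          + M * (-(deriv k x) / (2 * M))^2) * (4 * M)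
          = 4 * M * k x - (deriv k x)^2 := by
        field_simp
        ring
      rw [e] at h4
      linarith
    · right
      have hts : |(if 0 ≤ deriv k x then (-1:ℝ) else 1)| ≤ 1 := by
        split <;> simp
      have h := key x hx _ hts
      have habs : deriv k x * (if 0 ≤ deriv k x then (-1:ℝ) else 1) = -|deriv k x| := by
        rcases le_or_gt 0 (deriv k x) with h' | h'
        · rw [if_pos h', abs_of_nonneg h']; ring
        · rw [if_neg (not_le.mpr h'), abs_of_neg h']; ring
      have h2 : (if 0 ≤ deriv k x then (-1:ℝ) else 1)^2 = 1 := by split <;> ring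
      rw [habs, h2] at h
      constructor
      · linarith
      · linarith
  -- ε-level Lipschitz bound via MVT
  set C := Real.sqrt M + (K + M) / (2 * Real.sqrt M) with hCdef
  have hm : 0 < Real.sqrt M := Real.sqrt_pos.mpr hMpos
  have hCpos : 0 < C := add_pos_of_pos_of_nonneg hm (by positivity)
  have hC1 : Real.sqrt M ≤ C := le_add_of_nonneg_right (by positivity)
  have hC2 : (K + M) / (2 * Real.sqrt M) ≤ C := le_add_of_nonneg_left hm.le
  have hεlip : ∀ ε : ℝ, 0 < ε → ∀ x₁ ∈ Icc a b, ∀ x₂ ∈ Icc a b,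
      |Real.sqrt (k x₁ + ε) - Real.sqrt (k x₂ + ε)| ≤ C * |x₁ - x₂| := by
    intro ε hε x₁ h1 x₂ h2
    have hg : ∀ x : ℝ, HasDerivAt (fun x => Real.sqrt (k x + ε))
        (deriv k x / (2 * Real.sqrt (k x + ε))) x := by
      intro x
      have hkε : k x + ε ≠ 0 := ne_of_gt (by linarith [hnonneg x])
      have h := (Real.hasDerivAt_sqrt hkε).comp x (((hk x).hasDerivAt).add_const ε)
      have e : deriv k x / (2 * Real.sqrt (k x + ε))
          = 1 / (2 * Real.sqrt (k x + ε)) * deriv k x := by ring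
      rw [e]
      exact h
    have hgbound : ∀ x ∈ Icc a b,
        ‖deriv (fun x => Real.sqrt (k x + ε)) x‖ ≤ C := by
      intro x hx
      rw [(hg x).deriv]
      have hkε : (0:ℝ) < k x + ε := by linarith [hnonneg x]
      have hs : 0 < Real.sqrt (k x + ε) := Real.sqrt_pos.mpr hkε
      rw [Real.norm_eq_abs, abs_div, abs_of_pos (by linarith : (0:ℝ) < 2 * Real.sqrt (k x + ε))]
      rcases glaeser x hx with hA | ⟨hB1, hB2⟩
      · refine le_trans ?_ hC1
        rw [div_le_iff₀ (by linarith)]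
        have e2 : (Real.sqrt M * (2 * Real.sqrt (k x + ε)))^2 = 4 * M * (k x + ε) := by
          rw [mul_pow, mul_pow, Real.sq_sqrt hMpos.le, Real.sq_sqrt hkε.le]
          ring
        have hsq : (deriv k x)^2 ≤ (Real.sqrt M * (2 * Real.sqrt (k x + ε)))^2 := by
          rw [e2]
          nlinarith [mul_pos hMpos hε]
        have hrt := Real.sqrt_le_sqrt hsq
        rwa [Real.sqrt_sq_eq_abs, Real.sqrt_sq (by positivity)] at hrt
      · refine le_trans ?_ hC2
        have hkK : |deriv k x| ≤ K + M := le_trans hB2 (by linarith [hKbound x hx])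
        have hsM : Real.sqrt M ≤ Real.sqrt (k x + ε) :=
          Real.sqrt_le_sqrt (by linarith)
        exact div_le_div₀ (by linarith) hkK (by linarith) (by linarith)
    have := Convex.norm_image_sub_le_of_norm_deriv_le
      (f := fun x => Real.sqrt (k x + ε))
      (fun x _ => (hg x).differentiableAt) hgbound (convex_Icc a b) h2 h1
    simpa [Real.norm_eq_abs] using this
  -- take ε → 0
  refine ⟨C, hCpos, fun x₁ h1 x₂ h2 => ?_⟩
  have hcont : Continuous fun ε : ℝ =>
      |Real.sqrt (k x₁ + ε) - Real.sqrt (k x₂ + ε)| := by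
    apply Continuous.abs
    exact (Real.continuous_sqrt.comp (continuous_const.add continuous_id)).sub
      (Real.continuous_sqrt.comp (continuous_const.add continuous_id))
  have htends : Filter.Tendsto (fun ε : ℝ => |Real.sqrt (k x₁ + ε) - Real.sqrt (k x₂ + ε)|)
      (nhdsWithin 0 (Ioi 0)) (nhds (|Real.sqrt (k x₁) - Real.sqrt (k x₂)|)) := by
    have := (hcont.tendsto 0).mono_left (nhdsWithin_le_nhds (s := Ioi (0:ℝ)))
    simpa using this
  refine le_of_tendsto htends ?_
  filter_upwards [self_mem_nhdsWithin] with ε hε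
  exact hεlip ε hε x₁ h1 x₂ h2
end
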